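/- Fix Δ ≥ 1 and consider the two-node payment network with nodes v_1, v_2 and Δ parallel directed edges e_1, …, e_Δ from v_1 to v_2, with initial capital C_{v_1}(0) = C > 0 at v_1. For every deterministic online scheduling algorithm A and every ε > 0, there exists a transaction sequence t_1, …, t_n (each t_i routed from v_1 to v_2 through a single edge e_{j_i}, where e_{j_i} is an edge whose capacity under A just before time i is at most C_{v_1}(i)/Δ, with value v_i = C_{v_1}(i)/Δ + ε) such that any feasible response of A must perform at least one capacity modification at every time step 1, …, n; hence the step cost of A on this sequence is at least n. -/

import Mathlib

/-! Two-node payment-network scheduling model: nodes `v₁, v₂`, with `k` parallel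
directed edges `Fin k` from `v₁` to `v₂`; `v₁` has initial capital `W`.
Transaction `i` (for `i < n`, 0-indexed) is routed through the single edge `j i`
and has value `v i`.  A schedule is described by the capacities `c i e` available
on edge `e` when transaction `i` executes (together with the initial capacities
`c₀ e` holding before time `0`). -/

/-- Capital of node `v₁` available when transaction `i` executes:
`C_{v₁}(i) = W - Σ_{l < i} v l` (all transactions leave `v₁`). -/
def cap (W : ℝ) (v : ℕ → ℝ) (i : ℕ) : ℝ := W - ∑ l ∈ Finset.range i, v l

/-- Capacity of edge `e` just before the modifications of time `i`: the previous
capacity diminished by the value routed through `e` at time `i - 1`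
(`stale 0 = c₀`, the initial capacities). -/
def stale (k : ℕ) (c₀ : Fin k → ℝ) (j : ℕ → Fin k) (v : ℕ → ℝ)
    (c : ℕ → Fin k → ℝ) : ℕ → Fin k → ℝ
  | 0 => c₀
  | (i + 1) => fun e => c i e - (if j i = e then v i else 0)

/-- Feasibility of the schedule `c`: at each time `i < n` all capacities are
nonnegative, the edge `j i` used by transaction `i` has capacity at least `v i`,
and the total capacity of the edges leaving `v₁` is at most `v₁`'s capital. -/
def Feasible (k n : ℕ) (W : ℝ) (j : ℕ → Fin k) (v : ℕ → ℝ)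
    (c : ℕ → Fin k → ℝ) : Prop :=
  ∀ i < n, (∀ e, 0 ≤ c i e) ∧ v i ≤ c i (j i) ∧ (∑ e, c i e) ≤ cap W v i

/-- Edge `e` is modified at time `i` if the schedule sets its capacity to a value
different from its stale capacity. -/
def ModifiedAt (k : ℕ) (c₀ : Fin k → ℝ) (j : ℕ → Fin k) (v : ℕ → ℝ)
    (c : ℕ → Fin k → ℝ) (i : ℕ) (e : Fin k) : Prop :=
  c i e ≠ stale k c₀ j v c i e

/-- Step cost of a schedule: the total number of modifications (pairs of a time
`i < n` and an edge `e` whose capacity is modified at time `i`). -/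
noncomputable def stepCost (k n : ℕ) (c₀ : Fin k → ℝ) (j : ℕ → Fin k) (v : ℕ → ℝ)
    (c : ℕ → Fin k → ℝ) : ℕ :=
  ((Finset.range n ×ˢ (Finset.univ : Finset (Fin k))).filter
    (fun q => c q.1 q.2 ≠ stale k c₀ j v c q.1 q.2)).card


/-! The adversary sees the algorithm's capacities up to time `i - 1` before choosing
transaction `i`, since an online algorithm commits to them without seeing the future.
It routes transaction `i` through an edge of minimal stale capacity, which is at most
the average `C_{v₁}(i)/Δ` because feasibility keeps the total capacity below the
capital, and it asks for `ε` more than that. To serve it the algorithm has to raise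
the capacity of that edge, i.e. modify it, at every step. -/

theorem exists_forall_mem_of_causal {α : Type*} [Nonempty α]
    (S : ℕ → (ℕ → α) → Set α) (hne : ∀ i σ, (S i σ).Nonempty)
    (hS : ∀ i σ σ', (∀ l < i, σ l = σ' l) → S i σ = S i σ') :
    ∃ τ : ℕ → α, ∀ i, τ i ∈ S i τ := by
  -- `p i` is a sequence whose first `i` terms are the ones chosen so far.
  let p : ℕ → ℕ → α := fun i =>
    Nat.rec (fun _ => Classical.arbitrary α) (fun i q => Function.update q i (hne i q).some) i
  have p_succ : ∀ i, p (i + 1) = Function.update (p i) i (hne i (p i)).some := fun _ => rfl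
  have p_add : ∀ d i m, m < i → p (i + d) m = p i m := by
    intro d i m hm
    induction d with
    | zero => rfl
    | succ d ih => rw [← add_assoc, p_succ, Function.update_of_ne (by omega), ih]
  refine ⟨fun m => p (m + 1) m, fun i => ?_⟩
  have p_prefix : ∀ l < i, p (l + 1) l = p i l := fun l hl => by
    obtain ⟨d, rfl⟩ := Nat.exists_eq_add_of_le hl
    exact (p_add d (l + 1) l (Nat.lt_succ_self l)).symm
  rw [hS i _ (p i) p_prefix]
  show p (i + 1) i ∈ S i (p i)
  rw [p_succ, Function.update_self]
  exact (hne i (p i)).some_mem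

theorem cap_succ (W : ℝ) (v : ℕ → ℝ) (i : ℕ) : cap W v (i + 1) = cap W v i - v i := by
  simp only [cap, Finset.sum_range_succ]
  ring

theorem cap_congr {W : ℝ} {v v' : ℕ → ℝ} {i : ℕ} (h : ∀ l < i, v l = v' l) :
    cap W v i = cap W v' i := by
  unfold cap
  rw [Finset.sum_congr rfl fun l hl => h l (Finset.mem_range.mp hl)]

section Stale

variable {k : ℕ} {c₀ : Fin k → ℝ} {j : ℕ → Fin k} {v : ℕ → ℝ} {c : ℕ → Fin k → ℝ}

theorem stale_congr {j' : ℕ → Fin k} {v' : ℕ → ℝ} {c' : ℕ → Fin k → ℝ} {i : ℕ}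
    (h : ∀ l < i, j l = j' l ∧ v l = v' l ∧ c l = c' l) :
    stale k c₀ j v c i = stale k c₀ j' v' c' i := by
  cases i with
  | zero => rfl
  | succ m =>
    obtain ⟨hj, hv, hc⟩ := h m (Nat.lt_succ_self m)
    simp only [stale, hj, hv, hc]

theorem sum_stale_succ (i : ℕ) :
    ∑ e, stale k c₀ j v c (i + 1) e = ∑ e, c i e - v i := by
  simp only [stale, Finset.sum_sub_distrib, Finset.sum_ite_eq, Finset.mem_univ, if_true]

theorem sum_stale_le_cap {n : ℕ} {W : ℝ} (hc₀ : ∑ e, c₀ e ≤ W) (hF : Feasible k n W j v c)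
    {i : ℕ} (hi : i ≤ n) : ∑ e, stale k c₀ j v c i e ≤ cap W v i := by
  cases i with
  | zero => simpa [stale, cap] using hc₀
  | succ m =>
    rw [sum_stale_succ, cap_succ]
    exact sub_le_sub_right (hF m hi).2.2 _

theorem stale_le_cap_div_of_forall_le {n : ℕ} {W : ℝ} (hc₀ : ∑ e, c₀ e ≤ W)
    (hF : Feasible k n W j v c) {i : ℕ} (hi : i ≤ n)
    (hmin : ∀ e, stale k c₀ j v c i (j i) ≤ stale k c₀ j v c i e) :
    stale k c₀ j v c i (j i) ≤ cap W v i / k := by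
  have hk : (0 : ℝ) < k := by exact_mod_cast (j i).pos
  have hcard := Finset.card_nsmul_le_sum Finset.univ (stale k c₀ j v c i) _
    fun e _ => hmin e
  rw [Finset.card_univ, Fintype.card_fin, nsmul_eq_mul] at hcard
  rw [le_div_iff₀ hk, mul_comm]
  exact hcard.trans (sum_stale_le_cap hc₀ hF hi)

theorem modifiedAt_of_stale_lt {n : ℕ} {W : ℝ} (hF : Feasible k n W j v c) {i : ℕ}
    (hi : i < n) (hlt : stale k c₀ j v c i (j i) < v i) : ModifiedAt k c₀ j v c i (j i) :=
  fun heq => absurd ((hF i hi).2.1.trans heq.le) (not_le.mpr hlt)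

theorem le_stepCost_of_forall_modifiedAt {n : ℕ}
    (h : ∀ i < n, ModifiedAt k c₀ j v c i (j i)) : n ≤ stepCost k n c₀ j v c := by
  unfold stepCost
  calc n = (Finset.range n).card := (Finset.card_range n).symm
    _ ≤ _ := by
      refine Finset.card_le_card_of_injOn (fun i => (i, j i)) (fun i hi => ?_)
        fun a _ b _ hab => congrArg Prod.fst hab
      simp only [Finset.mem_coe, Finset.mem_filter, Finset.mem_product, Finset.mem_univ,
        and_true] at hi ⊢
      exact ⟨hi, h i (Finset.mem_range.mp hi)⟩

end Stale

theorem stale_online_congr {Δ : ℕ} (c₀ : Fin Δ → ℝ) (A : ℕ → (ℕ → Fin Δ × ℝ) → (Fin Δ → ℝ))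
    (honline : ∀ (i : ℕ) (σ σ' : ℕ → Fin Δ × ℝ), (∀ l ≤ i, σ l = σ' l) → A i σ = A i σ')
    {i : ℕ} {σ σ' : ℕ → Fin Δ × ℝ} (h : ∀ l < i, σ l = σ' l) :
    stale Δ c₀ (fun l => (σ l).1) (fun l => (σ l).2) (fun m => A m σ) i =
      stale Δ c₀ (fun l => (σ' l).1) (fun l => (σ' l).2) (fun m => A m σ') i :=
  stale_congr fun l hl => ⟨by rw [h l hl], by rw [h l hl],
    honline l σ σ' fun m hm => h m (by omega)⟩

theorem no_good_online_algorithm_lower_bound_general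
    (Δ : ℕ) (hΔ : 1 ≤ Δ) (C : ℝ)
    (c₀ : Fin Δ → ℝ) (hc₀sum : (∑ e, c₀ e) ≤ C)
    (A : ℕ → (ℕ → Fin Δ × ℝ) → (Fin Δ → ℝ))
    (honline : ∀ (i : ℕ) (σ σ' : ℕ → Fin Δ × ℝ),
      (∀ l ≤ i, σ l = σ' l) → A i σ = A i σ')
    (ε : ℝ) (hε : 0 < ε) (n : ℕ) :
    ∃ τ : ℕ → Fin Δ × ℝ,
      (∀ i < n, (τ i).2 = cap C (fun l => (τ l).2) i / Δ + ε) ∧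
      (Feasible Δ n C (fun l => (τ l).1) (fun l => (τ l).2) (fun i => A i τ) →
        (∀ i < n,
          stale Δ c₀ (fun l => (τ l).1) (fun l => (τ l).2) (fun i => A i τ) i (τ i).1
            ≤ cap C (fun l => (τ l).2) i / Δ) ∧
        (∀ i < n,
          ModifiedAt Δ c₀ (fun l => (τ l).1) (fun l => (τ l).2) (fun i => A i τ)
            i (τ i).1) ∧
        n ≤ stepCost Δ n c₀ (fun l => (τ l).1) (fun l => (τ l).2) (fun i => A i τ)) := by
  have : Nonempty (Fin Δ) := ⟨⟨0, hΔ⟩⟩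
  obtain ⟨τ, hτ⟩ := exists_forall_mem_of_causal (fun i σ => {x |
      (∀ e, stale Δ c₀ (fun l => (σ l).1) (fun l => (σ l).2) (fun m => A m σ) i x.1 ≤
        stale Δ c₀ (fun l => (σ l).1) (fun l => (σ l).2) (fun m => A m σ) i e) ∧
      x.2 = cap C (fun l => (σ l).2) i / Δ + ε})
    (fun i σ => (Finite.exists_min _).elim fun e he => ⟨(e, _), he, rfl⟩)
    (fun i σ σ' h => by
      rw [stale_online_congr c₀ A honline h, cap_congr fun l hl => by rw [h l hl]])
  refine ⟨τ, fun i _ => (hτ i).2, fun hF => ?_⟩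
  have hstale : ∀ i < n, stale Δ c₀ (fun l => (τ l).1) (fun l => (τ l).2) (fun i => A i τ) i
      (τ i).1 ≤ cap C (fun l => (τ l).2) i / Δ :=
    fun i hi => stale_le_cap_div_of_forall_le hc₀sum hF hi.le (hτ i).1
  have hmod : ∀ i < n, ModifiedAt Δ c₀ (fun l => (τ l).1) (fun l => (τ l).2)
      (fun i => A i τ) i (τ i).1 :=
    fun i hi => modifiedAt_of_stale_lt hF hi (by linarith [hstale i hi, (hτ i).2])
  exact ⟨hstale, hmod, le_stepCost_of_forall_modifiedAt hmod⟩

/-- Fix `Δ ≥ 1` and consider the two-node network with `Δ` parallel edges from `v₁`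
to `v₂`, initial capital `C > 0` at `v₁` and initial capacities `c₀`.
A deterministic online scheduling algorithm is a map `A` producing, at each time
`i`, the capacities `A i τ : Fin Δ → ℝ` used to serve transaction `i`, depending
only on the transactions `τ 0, …, τ i` seen so far (hypothesis `honline`).
For every `ε > 0` and every `n` there is a transaction sequence
`τ = (edge, value)` with `value i = C_{v₁}(i)/Δ + ε`, such that whenever `A`'s
response is feasible: the chosen edge of transaction `i` has stale capacity
(capacity under `A` just before time `i`) at most `C_{v₁}(i)/Δ`, the algorithm
performs at least one capacity modification at every time step `i < n`
(namely on the chosen edge), and hence its step cost is at least `n`. -/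
theorem no_good_online_algorithm_lower_bound
    (Δ : ℕ) (hΔ : 1 ≤ Δ) (C : ℝ) (hC : 0 < C)
    (c₀ : Fin Δ → ℝ) (hc₀ : ∀ e, 0 ≤ c₀ e) (hc₀sum : (∑ e, c₀ e) ≤ C)
    (A : ℕ → (ℕ → Fin Δ × ℝ) → (Fin Δ → ℝ))
    (honline : ∀ (i : ℕ) (σ σ' : ℕ → Fin Δ × ℝ),
      (∀ l ≤ i, σ l = σ' l) → A i σ = A i σ')
    (ε : ℝ) (hε : 0 < ε) (n : ℕ) :
    ∃ τ : ℕ → Fin Δ × ℝ,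
      (∀ i < n, (τ i).2 = cap C (fun l => (τ l).2) i / Δ + ε) ∧
      (Feasible Δ n C (fun l => (τ l).1) (fun l => (τ l).2) (fun i => A i τ) →
        (∀ i < n,
          stale Δ c₀ (fun l => (τ l).1) (fun l => (τ l).2) (fun i => A i τ) i (τ i).1
            ≤ cap C (fun l => (τ l).2) i / Δ) ∧
        (∀ i < n,
          ModifiedAt Δ c₀ (fun l => (τ l).1) (fun l => (τ l).2) (fun i => A i τ)
            i (τ i).1) ∧
        n ≤ stepCost Δ n c₀ (fun l => (τ l).1) (fun l => (τ l).2) (fun i => A i τ)) :=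
  no_good_online_algorithm_lower_bound_general Δ hΔ C c₀ hc₀sum A honline ε hε n
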